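/- arXiv:2101.08007 — 3 statements merged into one kernel-verified Lean document; each statement's English description precedes it below -/
import Mathlib

section
/- Suppose π = 1/2, x′ = 1−x, z′ = 1−z, x ≥ 1/2 and z ≥ 1/2. Then RD_obs lies between RD_true and RD_crude, i.e. min(RD_true, RD_crude) ≤ RD_obs ≤ max(RD_true, RD_crude). (Paper's Theorem 2.) -/
/-!
Under `π = 1/2`, `x' = 1 - x`, `z' = 1 - z` the model is symmetric under swapping `a ↔ ā`,
`c ↔ c̄`, `d ↔ d̄`, so `P(c | ā, d̄) = 1 - P(c | a, d)` and `P(c | ā, d) = 1 - P(c | a, d̄)`.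
Consequently all three risk differences are values of the one affine function
`s ↦ (y₁ - y₄) s + (y₂ - y₃) (1 - s)`: at `s = 1/2` for `RD_true`, at `s = P(c | a) = x` for
`RD_crude`, and at the mean `s̄` of `P(c | a, d)` and `P(c | a, d̄)` for `RD_obs`. It remains to see
`1/2 ≤ s̄ ≤ x`, which is read off from
`s̄ - 1/2 = z (1 - z) (2x - 1) / D` and `x - s̄ = x (1 - x) (2x - 1) (2z - 1)² / D`
with `D = 2 (xz + (1-x)(1-z)) (x(1-z) + (1-x)z) > 0`.
-/

open Set

lemma mul_add_mem_uIcc {α : Type*} [Field α] [LinearOrder α] [IsStrictOrderedRing α]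
    {a b s : α} (m c : α) (hs : s ∈ uIcc a b) : m * s + c ∈ uIcc (m * a + c) (m * b + c) := by
  rw [← image_add_const_uIcc, ← image_const_mul_uIcc]
  exact ⟨m * s, mem_image_of_mem _ hs, rfl⟩

lemma posterior_half_prior (a b : ℝ) :
    a * (1 / 2) / (a * (1 / 2) + b * (1 - 1 / 2)) = a / (a + b) := by
  rw [show (1 : ℝ) - 1 / 2 = 1 / 2 by norm_num, ← add_mul, mul_div_mul_right _ _ (by norm_num)]

lemma div_add_comm_eq_one_sub {a b : ℝ} (h : a + b ≠ 0) : b / (b + a) = 1 - a / (a + b) := by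
  rw [add_comm b a, one_sub_div h, add_sub_cancel_left]

/-- In the symmetric model: the mean of `P(c | a, d)` and `P(c | a, d̄)`, i.e. `P(c | a)`
standardized to the marginal law `P(d) = 1/2` of `D`. -/
noncomputable def standardizedPosterior (x z : ℝ) : ℝ :=
  (x * z / (x * z + (1 - x) * (1 - z)) + x * (1 - z) / (x * (1 - z) + (1 - x) * z)) / 2

lemma concordant_denom_pos {x z : ℝ} (hx : 1 / 2 ≤ x) (hz : 1 / 2 ≤ z) :
    0 < x * z + (1 - x) * (1 - z) := by
  nlinarith

lemma discordant_denom_pos {x z : ℝ} (hx : 1 / 2 ≤ x) (hx1 : x < 1) (hz1 : z < 1) :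
    0 < x * (1 - z) + (1 - x) * z := by
  nlinarith

lemma standardizedPosterior_mem_Icc {x z : ℝ} (hx : 1 / 2 ≤ x) (hx1 : x < 1) (hz : 1 / 2 ≤ z)
    (hz1 : z < 1) : standardizedPosterior x z ∈ Icc (1 / 2) x := by
  have hA := (concordant_denom_pos hx hz).ne'
  have hB := (discordant_denom_pos hx hx1 hz1).ne'
  have hD_pos : 0 < 2 * (x * z + (1 - x) * (1 - z)) * (x * (1 - z) + (1 - x) * z) := by
    positivity
  have hD := hD_pos.ne'
  have above_half : standardizedPosterior x z - 1 / 2 = z * (1 - z) * (2 * x - 1) /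
      (2 * (x * z + (1 - x) * (1 - z)) * (x * (1 - z) + (1 - x) * z)) := by
    rw [standardizedPosterior, div_add_div _ _ hA hB, div_div, sub_eq_iff_eq_add,
      div_add_div _ _ hD two_ne_zero, div_eq_div_iff (by positivity) (by positivity)]
    ring
  have below_x : x - standardizedPosterior x z = x * (1 - x) * (2 * x - 1) * (2 * z - 1) ^ 2 /
      (2 * (x * z + (1 - x) * (1 - z)) * (x * (1 - z) + (1 - x) * z)) := by
    rw [standardizedPosterior, div_add_div _ _ hA hB, div_div, sub_eq_iff_eq_add,
      div_add_div _ _ hD (by positivity), eq_div_iff (by positivity)]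
    ring
  constructor
  · have : 0 ≤ z * (1 - z) * (2 * x - 1) :=
      mul_nonneg (mul_nonneg (by linarith) (by linarith)) (by linarith)
    linarith [div_nonneg this hD_pos.le]
  · have : 0 ≤ x * (1 - x) * (2 * x - 1) * (2 * z - 1) ^ 2 :=
      mul_nonneg (mul_nonneg (mul_nonneg (by linarith) (by linarith)) (by linarith)) (sq_nonneg _)
    linarith [div_nonneg this hD_pos.le]

theorem thm2_between_general (pc x x' z z' : ℝ) (y₁ y₂ y₃ y₄ : ℝ)
    (hx1 : x < 1)
    (hz1 : z < 1)
    (hpch : pc = 1/2) (hx' : x' = 1 - x) (hz' : z' = 1 - z)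
    (hxge : x ≥ 1/2) (hzge : z ≥ 1/2)
    (Pca Pcab Pd Pcad Pcadb Pcbd Pcbdb EYad EYadb EYbd EYbdb RDtrue RDcrude RDobs : ℝ)
    (hPca : Pca = x*pc/(x*pc + x'*(1-pc)))
    (hPcab : Pcab = (1-x)*pc/((1-x)*pc + (1-x')*(1-pc)))
    (hPd : Pd = z*pc + z'*(1-pc))
    (hPcad : Pcad = x*z*pc/(x*z*pc + x'*z'*(1-pc)))
    (hPcadb : Pcadb = x*(1-z)*pc/(x*(1-z)*pc + x'*(1-z')*(1-pc)))
    (hPcbd : Pcbd = (1-x)*z*pc/((1-x)*z*pc + (1-x')*z'*(1-pc)))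
    (hPcbdb : Pcbdb = (1-x)*(1-z)*pc/((1-x)*(1-z)*pc + (1-x')*(1-z')*(1-pc)))
    (hEYad : EYad = y₁*Pcad + y₂*(1-Pcad))
    (hEYadb : EYadb = y₁*Pcadb + y₂*(1-Pcadb))
    (hEYbd : EYbd = y₃*Pcbd + y₄*(1-Pcbd))
    (hEYbdb : EYbdb = y₃*Pcbdb + y₄*(1-Pcbdb))
    (hRDtrue : RDtrue = (y₁-y₃)*pc + (y₂-y₄)*(1-pc))
    (hRDcrude : RDcrude = (y₁*Pca + y₂*(1-Pca)) - (y₃*Pcab + y₄*(1-Pcab)))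
    (hRDobs : RDobs = (EYad - EYbd)*Pd + (EYadb - EYbdb)*(1-Pd))
    :
    min RDtrue RDcrude ≤ RDobs ∧ RDobs ≤ max RDtrue RDcrude := by
  subst hpch hx' hz'
  simp only [sub_sub_cancel, posterior_half_prior, add_sub_cancel, sub_add_cancel, div_one]
    at hPca hPcab hPcad hPcadb hPcbd hPcbdb
  rw [div_add_comm_eq_one_sub (concordant_denom_pos hxge hzge).ne'] at hPcbdb
  rw [div_add_comm_eq_one_sub (discordant_denom_pos hxge hx1 hz1).ne'] at hPcbd
  have hRDtrue' : RDtrue = (y₁ - y₂ + y₃ - y₄) * (1 / 2) + (y₂ - y₃) := by rw [hRDtrue]; ring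
  have hRDcrude' : RDcrude = (y₁ - y₂ + y₃ - y₄) * x + (y₂ - y₃) := by
    rw [hRDcrude, hPca, hPcab]; ring
  have hRDobs' : RDobs = (y₁ - y₂ + y₃ - y₄) * standardizedPosterior x z + (y₂ - y₃) := by
    rw [hRDobs, hPd, hEYad, hEYadb, hEYbd, hEYbdb, hPcad, hPcadb, hPcbd, hPcbdb,
      standardizedPosterior]
    ring
  show RDobs ∈ uIcc RDtrue RDcrude
  rw [hRDtrue', hRDcrude', hRDobs']
  exact mul_add_mem_uIcc _ _ (Icc_subset_uIcc (standardizedPosterior_mem_Icc hxge hx1 hzge hz1))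

theorem thm2_between (pc x x' z z' : ℝ) (y₁ y₂ y₃ y₄ : ℝ)
    (hpc : 0 < pc) (hpc1 : pc < 1)
    (hx0 : 0 < x) (hx1 : x < 1) (hx'0 : 0 < x') (hx'1 : x' < 1)
    (hz0 : 0 < z) (hz1 : z < 1) (hz'0 : 0 < z') (hz'1 : z' < 1)
    (hpch : pc = 1/2) (hx' : x' = 1 - x) (hz' : z' = 1 - z)
    (hxge : x ≥ 1/2) (hzge : z ≥ 1/2)
    (Pca Pcab Pd Pcad Pcadb Pcbd Pcbdb EYad EYadb EYbd EYbdb RDtrue RDcrude RDobs : ℝ)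
    (hPca : Pca = x*pc/(x*pc + x'*(1-pc)))
    (hPcab : Pcab = (1-x)*pc/((1-x)*pc + (1-x')*(1-pc)))
    (hPd : Pd = z*pc + z'*(1-pc))
    (hPcad : Pcad = x*z*pc/(x*z*pc + x'*z'*(1-pc)))
    (hPcadb : Pcadb = x*(1-z)*pc/(x*(1-z)*pc + x'*(1-z')*(1-pc)))
    (hPcbd : Pcbd = (1-x)*z*pc/((1-x)*z*pc + (1-x')*z'*(1-pc)))
    (hPcbdb : Pcbdb = (1-x)*(1-z)*pc/((1-x)*(1-z)*pc + (1-x')*(1-z')*(1-pc)))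
    (hEYad : EYad = y₁*Pcad + y₂*(1-Pcad))
    (hEYadb : EYadb = y₁*Pcadb + y₂*(1-Pcadb))
    (hEYbd : EYbd = y₃*Pcbd + y₄*(1-Pcbd))
    (hEYbdb : EYbdb = y₃*Pcbdb + y₄*(1-Pcbdb))
    (hRDtrue : RDtrue = (y₁-y₃)*pc + (y₂-y₄)*(1-pc))
    (hRDcrude : RDcrude = (y₁*Pca + y₂*(1-Pca)) - (y₃*Pcab + y₄*(1-Pcab)))
    (hRDobs : RDobs = (EYad - EYbd)*Pd + (EYadb - EYbdb)*(1-Pd))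
    :
    min RDtrue RDcrude ≤ RDobs ∧ RDobs ≤ max RDtrue RDcrude :=
  thm2_between_general pc x x' z z' y₁ y₂ y₃ y₄ hx1 hz1 hpch hx' hz' hxge hzge Pca Pcab Pd Pcad
    Pcadb Pcbd Pcbdb EYad EYadb EYbd EYbdb RDtrue RDcrude RDobs hPca hPcab hPd hPcad hPcadb hPcbd
    hPcbdb hEYad hEYadb hEYbd hEYbdb hRDtrue hRDcrude hRDobs
end

section
/- Suppose π = 1/2, x′ = 1−x, z′ = 1−z, x ≥ 1/2 and z ≥ 1/2. If y₁ − y₂ ≥ y₄ − y₃ ≥ 0, then RD_crude ≥ RD_obs ≥ RD_true; and if y₁ − y₂ ≤ y₄ − y₃ ≤ 0, then RD_crude ≤ RD_obs ≤ RD_true. (Paper's Corollary 1.) -/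
/-!
With `π = 1/2`, `x' = 1 - x` and `z' = 1 - z`, every conditional probability in the model is a
Bayes update of the prior `x` (or `1 - x`) by a test with sensitivity and specificity `z`. Then all
three risk differences are `w (y₁ - y₄) + (1 - w) (y₂ - y₃)` for weights `w = x`,
`w = (P(c|a,d) + P(c|a,d̄)) / 2` and `w = 1/2`, and such a mixture is monotone in `w` with the sign
of `(y₁ - y₂) - (y₄ - y₃)`. It remains to see that the middle weight lies between `1/2` and `x`.
-/

noncomputable def bayesUpdate (x z : ℝ) : ℝ := x * z / (x * z + (1 - x) * (1 - z))

def weightedRD (y₁ y₂ y₃ y₄ w : ℝ) : ℝ := w * (y₁ - y₄) + (1 - w) * (y₂ - y₃)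

section BayesUpdate

variable {x z : ℝ}

theorem bayesUpdate_eq_half_prior (x z : ℝ) :
    x * z * (1 / 2) / (x * z * (1 / 2) + (1 - x) * (1 - z) * (1 - 1 / 2)) = bayesUpdate x z := by
  rw [show (1 : ℝ) - 1 / 2 = 1 / 2 by norm_num, ← add_mul, mul_div_mul_right _ _ (by norm_num),
    bayesUpdate]

theorem bayesUpdate_denom_pos (hx0 : 0 < x) (hx1 : x < 1) (hz0 : 0 ≤ z) (hz1 : z ≤ 1) :
    0 < x * z + (1 - x) * (1 - z) := by
  nlinarith [mul_nonneg hz0 hx0.le, mul_nonneg (sub_nonneg.2 hz1) (sub_pos.2 hx1).le,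
    mul_pos hx0 (sub_pos.2 hx1)]

theorem bayesUpdate_one_sub_denom_pos (hx0 : 0 < x) (hx1 : x < 1) (hz0 : 0 ≤ z) (hz1 : z ≤ 1) :
    0 < x * (1 - z) + (1 - x) * z := by
  simpa only [sub_sub_cancel] using
    bayesUpdate_denom_pos hx0 hx1 (sub_nonneg.2 hz1) (sub_le_self _ hz0)

theorem bayesUpdate_one_sub_left (hx0 : 0 < x) (hx1 : x < 1) (hz0 : 0 ≤ z) (hz1 : z ≤ 1) :
    bayesUpdate (1 - x) z = 1 - bayesUpdate x (1 - z) := by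
  unfold bayesUpdate
  rw [sub_sub_cancel, sub_sub_cancel, eq_sub_iff_add_eq, add_comm ((1 - x) * z), ← add_div,
    add_comm ((1 - x) * z), div_self (bayesUpdate_one_sub_denom_pos hx0 hx1 hz0 hz1).ne']

theorem bayesUpdate_add_bayesUpdate_one_sub_eq_one_add (hx0 : 0 < x) (hx1 : x < 1)
    (hz0 : 0 ≤ z) (hz1 : z ≤ 1) :
    bayesUpdate x z + bayesUpdate x (1 - z) = 1 + z * (1 - z) * (2 * x - 1) /
      ((x * z + (1 - x) * (1 - z)) * (x * (1 - z) + (1 - x) * z)) := by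
  have hD₁ := bayesUpdate_denom_pos hx0 hx1 hz0 hz1
  have hD₂ := bayesUpdate_one_sub_denom_pos hx0 hx1 hz0 hz1
  unfold bayesUpdate
  rw [sub_sub_cancel, div_add_div _ _ hD₁.ne' hD₂.ne', one_add_div (mul_pos hD₁ hD₂).ne']
  ring

theorem bayesUpdate_add_bayesUpdate_one_sub_eq_two_mul_sub (hx0 : 0 < x) (hx1 : x < 1)
    (hz0 : 0 ≤ z) (hz1 : z ≤ 1) :
    bayesUpdate x z + bayesUpdate x (1 - z) = 2 * x - x * (1 - x) * (2 * z - 1) ^ 2 * (2 * x - 1) /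
      ((x * z + (1 - x) * (1 - z)) * (x * (1 - z) + (1 - x) * z)) := by
  have hD₁ := bayesUpdate_denom_pos hx0 hx1 hz0 hz1
  have hD₂ := bayesUpdate_one_sub_denom_pos hx0 hx1 hz0 hz1
  unfold bayesUpdate
  rw [sub_sub_cancel, div_add_div _ _ hD₁.ne' hD₂.ne', sub_div' (mul_pos hD₁ hD₂).ne']
  ring

theorem one_le_bayesUpdate_add_bayesUpdate_one_sub (hx : 1 / 2 ≤ x) (hx1 : x < 1)
    (hz0 : 0 ≤ z) (hz1 : z ≤ 1) :
    1 ≤ bayesUpdate x z + bayesUpdate x (1 - z) := by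
  have hx0 : 0 < x := by linarith
  rw [bayesUpdate_add_bayesUpdate_one_sub_eq_one_add hx0 hx1 hz0 hz1]
  refine le_add_of_nonneg_right (div_nonneg ?_ (mul_pos (bayesUpdate_denom_pos hx0 hx1 hz0 hz1)
    (bayesUpdate_one_sub_denom_pos hx0 hx1 hz0 hz1)).le)
  exact mul_nonneg (mul_nonneg hz0 (sub_nonneg.2 hz1)) (by linarith)

theorem bayesUpdate_add_bayesUpdate_one_sub_le (hx : 1 / 2 ≤ x) (hx1 : x < 1)
    (hz0 : 0 ≤ z) (hz1 : z ≤ 1) :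
    bayesUpdate x z + bayesUpdate x (1 - z) ≤ 2 * x := by
  have hx0 : 0 < x := by linarith
  rw [bayesUpdate_add_bayesUpdate_one_sub_eq_two_mul_sub hx0 hx1 hz0 hz1]
  refine sub_le_self _ (div_nonneg ?_ (mul_pos (bayesUpdate_denom_pos hx0 hx1 hz0 hz1)
    (bayesUpdate_one_sub_denom_pos hx0 hx1 hz0 hz1)).le)
  exact mul_nonneg (mul_nonneg (mul_nonneg hx0.le (sub_nonneg.2 hx1.le)) (sq_nonneg _))
    (by linarith)

end BayesUpdate

section WeightedRD

variable {y₁ y₂ y₃ y₄ : ℝ}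

theorem weightedRD_monotone (h : y₄ - y₃ ≤ y₁ - y₂) : Monotone (weightedRD y₁ y₂ y₃ y₄) :=
  fun w w' hw => by unfold weightedRD; nlinarith

theorem weightedRD_antitone (h : y₁ - y₂ ≤ y₄ - y₃) : Antitone (weightedRD y₁ y₂ y₃ y₄) :=
  fun w w' hw => by unfold weightedRD; nlinarith

end WeightedRD

theorem cor1_general (pc x x' z z' : ℝ) (y₁ y₂ y₃ y₄ : ℝ)
    (hx1 : x < 1)
    (hz0 : 0 < z) (hz1 : z < 1)
    (hpch : pc = 1/2) (hx' : x' = 1 - x) (hz' : z' = 1 - z)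
    (hxge : x ≥ 1/2)
    (Pca Pcab Pd Pcad Pcadb Pcbd Pcbdb EYad EYadb EYbd EYbdb RDtrue RDcrude RDobs : ℝ)
    (hPca : Pca = x*pc/(x*pc + x'*(1-pc)))
    (hPcab : Pcab = (1-x)*pc/((1-x)*pc + (1-x')*(1-pc)))
    (hPd : Pd = z*pc + z'*(1-pc))
    (hPcad : Pcad = x*z*pc/(x*z*pc + x'*z'*(1-pc)))
    (hPcadb : Pcadb = x*(1-z)*pc/(x*(1-z)*pc + x'*(1-z')*(1-pc)))
    (hPcbd : Pcbd = (1-x)*z*pc/((1-x)*z*pc + (1-x')*z'*(1-pc)))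
    (hPcbdb : Pcbdb = (1-x)*(1-z)*pc/((1-x)*(1-z)*pc + (1-x')*(1-z')*(1-pc)))
    (hEYad : EYad = y₁*Pcad + y₂*(1-Pcad))
    (hEYadb : EYadb = y₁*Pcadb + y₂*(1-Pcadb))
    (hEYbd : EYbd = y₃*Pcbd + y₄*(1-Pcbd))
    (hEYbdb : EYbdb = y₃*Pcbdb + y₄*(1-Pcbdb))
    (hRDtrue : RDtrue = (y₁-y₃)*pc + (y₂-y₄)*(1-pc))
    (hRDcrude : RDcrude = (y₁*Pca + y₂*(1-Pca)) - (y₃*Pcab + y₄*(1-Pcab)))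
    (hRDobs : RDobs = (EYad - EYbd)*Pd + (EYadb - EYbdb)*(1-Pd))
    :
    (y₁ - y₂ ≥ y₄ - y₃ ∧ y₄ - y₃ ≥ 0 → RDcrude ≥ RDobs ∧ RDobs ≥ RDtrue) ∧
    (y₁ - y₂ ≤ y₄ - y₃ ∧ y₄ - y₃ ≤ 0 → RDcrude ≤ RDobs ∧ RDobs ≤ RDtrue) := by
  subst hpch hx' hz'
  have hx0 : 0 < x := by linarith
  rw [bayesUpdate_eq_half_prior] at hPcad hPcadb hPcbd hPcbdb
  rw [bayesUpdate_one_sub_left hx0 hx1 hz0.le hz1.le] at hPcbd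
  rw [bayesUpdate_one_sub_left hx0 hx1 (sub_nonneg.2 hz1.le) (sub_le_self _ hz0.le),
    sub_sub_cancel] at hPcbdb
  have hcrude : RDcrude = weightedRD y₁ y₂ y₃ y₄ x := by
    rw [hRDcrude, hPca, hPcab, weightedRD]; ring
  have hobs : RDobs =
      weightedRD y₁ y₂ y₃ y₄ ((bayesUpdate x z + bayesUpdate x (1 - z)) / 2) := by
    rw [hRDobs, hPd, hEYad, hEYadb, hEYbd, hEYbdb, hPcad, hPcadb, hPcbd, hPcbdb, weightedRD]
    ring
  have htrue : RDtrue = weightedRD y₁ y₂ y₃ y₄ (1 / 2) := by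
    rw [hRDtrue, weightedRD]; ring
  have hlow := one_le_bayesUpdate_add_bayesUpdate_one_sub hxge hx1 hz0.le hz1.le
  have hhigh := bayesUpdate_add_bayesUpdate_one_sub_le hxge hx1 hz0.le hz1.le
  rw [hcrude, hobs, htrue]
  refine ⟨fun ⟨hk, _⟩ => ⟨?_, ?_⟩, fun ⟨hk, _⟩ => ⟨?_, ?_⟩⟩
  · exact weightedRD_monotone hk (by linarith)
  · exact weightedRD_monotone hk (by linarith)
  · exact weightedRD_antitone hk (by linarith)
  · exact weightedRD_antitone hk (by linarith)

theorem cor1 (pc x x' z z' : ℝ) (y₁ y₂ y₃ y₄ : ℝ)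
    (hpc : 0 < pc) (hpc1 : pc < 1)
    (hx0 : 0 < x) (hx1 : x < 1) (hx'0 : 0 < x') (hx'1 : x' < 1)
    (hz0 : 0 < z) (hz1 : z < 1) (hz'0 : 0 < z') (hz'1 : z' < 1)
    (hpch : pc = 1/2) (hx' : x' = 1 - x) (hz' : z' = 1 - z)
    (hxge : x ≥ 1/2) (hzge : z ≥ 1/2)
    (Pca Pcab Pd Pcad Pcadb Pcbd Pcbdb EYad EYadb EYbd EYbdb RDtrue RDcrude RDobs : ℝ)
    (hPca : Pca = x*pc/(x*pc + x'*(1-pc)))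
    (hPcab : Pcab = (1-x)*pc/((1-x)*pc + (1-x')*(1-pc)))
    (hPd : Pd = z*pc + z'*(1-pc))
    (hPcad : Pcad = x*z*pc/(x*z*pc + x'*z'*(1-pc)))
    (hPcadb : Pcadb = x*(1-z)*pc/(x*(1-z)*pc + x'*(1-z')*(1-pc)))
    (hPcbd : Pcbd = (1-x)*z*pc/((1-x)*z*pc + (1-x')*z'*(1-pc)))
    (hPcbdb : Pcbdb = (1-x)*(1-z)*pc/((1-x)*(1-z)*pc + (1-x')*(1-z')*(1-pc)))
    (hEYad : EYad = y₁*Pcad + y₂*(1-Pcad))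
    (hEYadb : EYadb = y₁*Pcadb + y₂*(1-Pcadb))
    (hEYbd : EYbd = y₃*Pcbd + y₄*(1-Pcbd))
    (hEYbdb : EYbdb = y₃*Pcbdb + y₄*(1-Pcbdb))
    (hRDtrue : RDtrue = (y₁-y₃)*pc + (y₂-y₄)*(1-pc))
    (hRDcrude : RDcrude = (y₁*Pca + y₂*(1-Pca)) - (y₃*Pcab + y₄*(1-Pcab)))
    (hRDobs : RDobs = (EYad - EYbd)*Pd + (EYadb - EYbdb)*(1-Pd))
    :
    (y₁ - y₂ ≥ y₄ - y₃ ∧ y₄ - y₃ ≥ 0 → RDcrude ≥ RDobs ∧ RDobs ≥ RDtrue) ∧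
    (y₁ - y₂ ≤ y₄ - y₃ ∧ y₄ - y₃ ≤ 0 → RDcrude ≤ RDobs ∧ RDobs ≤ RDtrue) :=
  cor1_general pc x x' z z' y₁ y₂ y₃ y₄ hx1 hz0 hz1 hpch hx' hz' hxge Pca Pcab Pd Pcad Pcadb Pcbd
    Pcbdb EYad EYadb EYbd EYbdb RDtrue RDcrude RDobs hPca hPcab hPd hPcad hPcadb hPcbd hPcbdb hEYad
    hEYadb hEYbd hEYbdb hRDtrue hRDcrude hRDobs
end

section
/- Suppose π = 1/2, z′ = 1−z with z ≥ 1/2, and 1−x′ ≥ x ≥ 1/2 (i.e. P(A=ā|C=c̄) ≥ P(A=a|C=c) ≥ 1/2). If y₁ − y₂ ≥ y₄ − y₃ ≥ 0, then RD_crude ≥ RD_true and RD_obs ≥ RD_true; and if y₁ − y₂ ≤ y₄ − y₃ ≤ 0, then RD_crude ≤ RD_true and RD_obs ≤ RD_true. (Peña 2020, Theorems 5–6, as re-stated in the paper.) -/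
/-!
At prior `1/2` the posterior of `c` given evidence with likelihoods `l` under `c` and `l'` under
`c̄` is `l / (l + l')`, and two such posteriors sum to at least `1` exactly when `l' m' ≤ l m`.
The hypotheses on `x, x'` give `x' ≤ x` and `x' (1 - x') ≤ x (1 - x)`, hence `P(c|a) ≥ 1/2`,
`P(c|a) + P(c|ā) ≥ 1`, `P(c|a,d) + P(c|a,d̄) ≥ 1`, and also `P(c|a,d) + P(c|ā,d̄) ≥ 1` and
`P(c|a,d̄) + P(c|ā,d) ≥ 1`. Since `π = P(d) = 1/2`, with `α = y₁ - y₂` and `β = y₄ - y₃`,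
`RD_crude - RD_true = α (P(c|a) - 1/2) + β (P(c|ā) - 1/2)` and
`2 (RD_obs - RD_true) = α (P(c|a,d) + P(c|a,d̄) - 1) + β (P(c|ā,d) + P(c|ā,d̄) - 1)`.
Both have the form `α u + β v` with `0 ≤ u` and `0 ≤ u + v`, which has the sign of `β` when `α` lies
beyond `β` on the same side of `0`.
-/

/-- Bayes' rule for `P(c | e)` from the prior `p = P(c)` and the likelihoods
`l = P(e | c)`, `l' = P(e | c̄)`. -/
noncomputable def posterior (p l l' : ℝ) : ℝ := l * p / (l * p + l' * (1 - p))

section posterior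

variable {l l' m m' : ℝ}

theorem posterior_half (l l' : ℝ) : posterior (1 / 2) l l' = l / (l + l') := by
  rw [posterior, show (1 : ℝ) - 1 / 2 = 1 / 2 by norm_num, ← add_mul,
    mul_div_mul_right _ _ (by norm_num)]

theorem half_le_posterior_half (h : 0 < l + l') (hle : l' ≤ l) :
    1 / 2 ≤ posterior (1 / 2) l l' := by
  rw [posterior_half, le_div_iff₀ h]
  linarith

theorem one_le_posterior_half_add_posterior_half (hl : 0 < l + l') (hm : 0 < m + m')
    (h : l' * m' ≤ l * m) : 1 ≤ posterior (1 / 2) l l' + posterior (1 / 2) m m' := by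
  rw [posterior_half, posterior_half, div_add_div _ _ hl.ne' hm.ne', le_div_iff₀ (mul_pos hl hm)]
  linarith

theorem one_le_posterior_half_mul_add_posterior_half_mul {x x' y y' w w' : ℝ} (hx : 0 < x)
    (hx' : 0 < x') (hy : 0 < y) (hy' : 0 < y') (hw : 0 < w) (hw' : 0 < w')
    (h : x' * y' ≤ x * y) :
    1 ≤ posterior (1 / 2) (x * w) (x' * w') + posterior (1 / 2) (y * w') (y' * w) := by
  refine one_le_posterior_half_add_posterior_half (by positivity) (by positivity) ?_
  have := mul_le_mul_of_nonneg_right h (mul_pos hw hw').le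
  linarith

end posterior

theorem mul_add_mul_sign_of_le {a b u v : ℝ} (hu : 0 ≤ u) (huv : 0 ≤ u + v) :
    (b ≤ a ∧ 0 ≤ b → 0 ≤ a * u + b * v) ∧ (a ≤ b ∧ b ≤ 0 → a * u + b * v ≤ 0) := by
  have h : a * u + b * v = (a - b) * u + b * (u + v) := by ring
  refine ⟨fun ⟨hba, hb⟩ => ?_, fun ⟨hab, hb⟩ => ?_⟩ <;> rw [h]
  · exact add_nonneg (mul_nonneg (sub_nonneg.2 hba) hu) (mul_nonneg hb huv)
  · exact add_nonpos (mul_nonpos_of_nonpos_of_nonneg (sub_nonpos.2 hab) hu)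
      (mul_nonpos_of_nonpos_of_nonneg hb huv)

theorem pena2020_thm5_6_general (pc x x' z z' : ℝ) (y₁ y₂ y₃ y₄ : ℝ)
    (hx0 : 0 < x) (hx'0 : 0 < x')
    (hz0 : 0 < z) (hz1 : z < 1)
    (hpch : pc = 1/2) (hz' : z' = 1 - z)
    (hxx' : 1 - x' ≥ x) (hxge : x ≥ 1/2)
    (Pca Pcab Pd Pcad Pcadb Pcbd Pcbdb EYad EYadb EYbd EYbdb RDtrue RDcrude RDobs : ℝ)
    (hPca : Pca = x*pc/(x*pc + x'*(1-pc)))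
    (hPcab : Pcab = (1-x)*pc/((1-x)*pc + (1-x')*(1-pc)))
    (hPd : Pd = z*pc + z'*(1-pc))
    (hPcad : Pcad = x*z*pc/(x*z*pc + x'*z'*(1-pc)))
    (hPcadb : Pcadb = x*(1-z)*pc/(x*(1-z)*pc + x'*(1-z')*(1-pc)))
    (hPcbd : Pcbd = (1-x)*z*pc/((1-x)*z*pc + (1-x')*z'*(1-pc)))
    (hPcbdb : Pcbdb = (1-x)*(1-z)*pc/((1-x)*(1-z)*pc + (1-x')*(1-z')*(1-pc)))
    (hEYad : EYad = y₁*Pcad + y₂*(1-Pcad))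
    (hEYadb : EYadb = y₁*Pcadb + y₂*(1-Pcadb))
    (hEYbd : EYbd = y₃*Pcbd + y₄*(1-Pcbd))
    (hEYbdb : EYbdb = y₃*Pcbdb + y₄*(1-Pcbdb))
    (hRDtrue : RDtrue = (y₁-y₃)*pc + (y₂-y₄)*(1-pc))
    (hRDcrude : RDcrude = (y₁*Pca + y₂*(1-Pca)) - (y₃*Pcab + y₄*(1-Pcab)))
    (hRDobs : RDobs = (EYad - EYbd)*Pd + (EYadb - EYbdb)*(1-Pd))
    :
    (y₁ - y₂ ≥ y₄ - y₃ ∧ y₄ - y₃ ≥ 0 → RDcrude ≥ RDtrue ∧ RDobs ≥ RDtrue) ∧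
    (y₁ - y₂ ≤ y₄ - y₃ ∧ y₄ - y₃ ≤ 0 → RDcrude ≤ RDtrue ∧ RDobs ≤ RDtrue) := by
  subst hpch hz'
  rw [sub_sub_cancel] at hPcadb hPcbdb
  have hx : 0 < 1 - x := by linarith
  have hx' : 0 < 1 - x' := by linarith
  have hz : 0 < 1 - z := by linarith
  have hx'x : x' ≤ x := by linarith
  have hvar : x' * (1 - x') ≤ x * (1 - x) := by
    nlinarith [mul_nonneg (sub_nonneg.2 hx'x) (show 0 ≤ 1 - x - x' by linarith)]
  have hca : 1 / 2 ≤ Pca := hPca ▸ half_le_posterior_half (by positivity) hx'x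
  have hca_cab : 1 ≤ Pca + Pcab :=
    hPca ▸ hPcab ▸ one_le_posterior_half_add_posterior_half (by positivity) (by positivity) hvar
  have hcad_cadb : 1 ≤ Pcad + Pcadb := hPcad ▸ hPcadb ▸
    one_le_posterior_half_mul_add_posterior_half_mul hx0 hx'0 hx0 hx'0 hz0 hz
      (mul_self_le_mul_self hx'0.le hx'x)
  have hcad_cbdb : 1 ≤ Pcad + Pcbdb := hPcad ▸ hPcbdb ▸
    one_le_posterior_half_mul_add_posterior_half_mul hx0 hx'0 hx hx' hz0 hz hvar
  have hcbd_cadb : 1 ≤ Pcbd + Pcadb := hPcbd ▸ hPcadb ▸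
    one_le_posterior_half_mul_add_posterior_half_mul hx hx' hx0 hx'0 hz0 hz (by linarith)
  have hcrude_eq :
      RDcrude - RDtrue = (y₁ - y₂) * (Pca - 1 / 2) + (y₄ - y₃) * (Pcab - 1 / 2) := by
    rw [hRDcrude, hRDtrue]; ring
  have hobs_eq : 2 * (RDobs - RDtrue) =
      (y₁ - y₂) * (Pcad + Pcadb - 1) + (y₄ - y₃) * (Pcbd + Pcbdb - 1) := by
    rw [hRDobs, hEYad, hEYadb, hEYbd, hEYbdb, hPd, hRDtrue]; ring
  have hcrude := mul_add_mul_sign_of_le (a := y₁ - y₂) (b := y₄ - y₃) (sub_nonneg.2 hca)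
    (show 0 ≤ (Pca - 1 / 2) + (Pcab - 1 / 2) by linarith)
  have hobs := mul_add_mul_sign_of_le (a := y₁ - y₂) (b := y₄ - y₃) (sub_nonneg.2 hcad_cadb)
    (show 0 ≤ (Pcad + Pcadb - 1) + (Pcbd + Pcbdb - 1) by linarith)
  rw [← hcrude_eq] at hcrude
  rw [← hobs_eq] at hobs
  exact ⟨fun h => ⟨by linarith [hcrude.1 h], by linarith [hobs.1 h]⟩,
    fun h => ⟨by linarith [hcrude.2 h], by linarith [hobs.2 h]⟩⟩

theorem pena2020_thm5_6 (pc x x' z z' : ℝ) (y₁ y₂ y₃ y₄ : ℝ)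
    (hpc : 0 < pc) (hpc1 : pc < 1)
    (hx0 : 0 < x) (hx1 : x < 1) (hx'0 : 0 < x') (hx'1 : x' < 1)
    (hz0 : 0 < z) (hz1 : z < 1) (hz'0 : 0 < z') (hz'1 : z' < 1)
    (hpch : pc = 1/2) (hz' : z' = 1 - z) (hzge : z ≥ 1/2)
    (hxx' : 1 - x' ≥ x) (hxge : x ≥ 1/2)
    (Pca Pcab Pd Pcad Pcadb Pcbd Pcbdb EYad EYadb EYbd EYbdb RDtrue RDcrude RDobs : ℝ)
    (hPca : Pca = x*pc/(x*pc + x'*(1-pc)))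
    (hPcab : Pcab = (1-x)*pc/((1-x)*pc + (1-x')*(1-pc)))
    (hPd : Pd = z*pc + z'*(1-pc))
    (hPcad : Pcad = x*z*pc/(x*z*pc + x'*z'*(1-pc)))
    (hPcadb : Pcadb = x*(1-z)*pc/(x*(1-z)*pc + x'*(1-z')*(1-pc)))
    (hPcbd : Pcbd = (1-x)*z*pc/((1-x)*z*pc + (1-x')*z'*(1-pc)))
    (hPcbdb : Pcbdb = (1-x)*(1-z)*pc/((1-x)*(1-z)*pc + (1-x')*(1-z')*(1-pc)))
    (hEYad : EYad = y₁*Pcad + y₂*(1-Pcad))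
    (hEYadb : EYadb = y₁*Pcadb + y₂*(1-Pcadb))
    (hEYbd : EYbd = y₃*Pcbd + y₄*(1-Pcbd))
    (hEYbdb : EYbdb = y₃*Pcbdb + y₄*(1-Pcbdb))
    (hRDtrue : RDtrue = (y₁-y₃)*pc + (y₂-y₄)*(1-pc))
    (hRDcrude : RDcrude = (y₁*Pca + y₂*(1-Pca)) - (y₃*Pcab + y₄*(1-Pcab)))
    (hRDobs : RDobs = (EYad - EYbd)*Pd + (EYadb - EYbdb)*(1-Pd))
    :
    (y₁ - y₂ ≥ y₄ - y₃ ∧ y₄ - y₃ ≥ 0 → RDcrude ≥ RDtrue ∧ RDobs ≥ RDtrue) ∧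
    (y₁ - y₂ ≤ y₄ - y₃ ∧ y₄ - y₃ ≤ 0 → RDcrude ≤ RDtrue ∧ RDobs ≤ RDtrue) :=
  pena2020_thm5_6_general pc x x' z z' y₁ y₂ y₃ y₄ hx0 hx'0 hz0 hz1 hpch hz' hxx' hxge Pca Pcab Pd
    Pcad Pcadb Pcbd Pcbdb EYad EYadb EYbd EYbdb RDtrue RDcrude RDobs hPca hPcab hPd hPcad hPcadb
    hPcbd hPcbdb hEYad hEYadb hEYbd hEYbdb hRDtrue hRDcrude hRDobs
end
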